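/- arXiv:2505.15059 — 2 statements merged into one kernel-verified Lean document; each statement's English description precedes it below -/
import Mathlib

section
/- Let L > 0 be an integer and suppose the positive numbers Ẑ₁,…,Ẑ_L and Z₁,…,Z_L satisfy (Ẑ_i/Z_i)/(Ẑ₁/Z₁) ∈ [(1 − 1/L)^{i−1}, (1 + 1/L)^{i−1}] for all i ∈ [L]. Define r_i = (Z_i/Ẑ_i) / ∑_{k=1}^L (Z_k/Ẑ_k). Then e^{−2}/L ≤ r_i ≤ e²/L for all i ∈ [L], and consequently r := min_{i∈[L]} r_i / max_{i∈[L]} r_i ≥ e^{−4}. -/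
/-!
Since `i ≤ L - 1`, both `(1 - 1/L)^i` and `(1 + 1/L)^i` lie in `[e⁻¹, e]`, so every weight
`Z_i / Ẑ_i` is within a factor `e` of the first one. Dividing one such weight by the sum of `L`
of them gives a value in `[e⁻²/L, e²/L]`, and the ratio of the extreme values is at least `e⁻⁴`.
-/

open Finset Real

lemma one_add_inv_pow_le_exp_one {n k : ℕ} (hk : k ≤ n) : (1 + 1 / (n : ℝ)) ^ k ≤ exp 1 :=
  calc (1 + 1 / (n : ℝ)) ^ k ≤ exp (1 / n) ^ k := by
        gcongr
        linarith [add_one_le_exp (1 / (n : ℝ))]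
    _ = exp (k / n) := by rw [← exp_nat_mul, mul_one_div]
    _ ≤ exp 1 := exp_le_exp.mpr (div_le_one_of_le₀ (by exact_mod_cast hk) n.cast_nonneg)

/-- `1 - 1 / (m + 1)` is the reciprocal of `1 + 1 / m`, so this reduces to the previous bound. -/
lemma exp_neg_one_le_one_sub_inv_pow {n k : ℕ} (hk : k < n) : exp (-1) ≤ (1 - 1 / (n : ℝ)) ^ k := by
  obtain ⟨m, rfl⟩ : ∃ m, n = m + 1 := ⟨n - 1, by omega⟩
  rcases Nat.eq_zero_or_pos m with rfl | hm
  · obtain rfl : k = 0 := by omega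
    simp
  have hrecip : 1 - 1 / ((m + 1 : ℕ) : ℝ) = (1 + 1 / (m : ℝ))⁻¹ := by
    have : (0 : ℝ) < m := by exact_mod_cast hm
    push_cast
    field_simp
    ring
  rw [hrecip, inv_pow, exp_neg]
  exact inv_anti₀ (by positivity) (one_add_inv_pow_le_exp_one (by omega))

lemma mem_Icc_div_mul_of_div_mem_Icc {a x c : ℝ} (ha : 0 < a) (hx : 0 < x)
    (h : a / x ∈ Set.Icc c⁻¹ c) : x ∈ Set.Icc (a / c) (a * c) := by
  have hc : 0 < c := (div_pos ha hx).trans_le h.2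
  constructor
  · rw [div_le_iff₀ hc, mul_comm, ← div_le_iff₀ hx]
    exact h.2
  · rw [← div_le_iff₀' ha, ← inv_div]
    exact inv_le_of_inv_le₀ hc h.1

section NormalizedWeights

variable {ι : Type*} [Fintype ι]

lemma div_sum_mem_Icc {w : ι → ℝ} {m M : ℝ} (hm : 0 < m) (hw : ∀ i, w i ∈ Set.Icc m M) (j : ι) :
    w j / ∑ i, w i ∈ Set.Icc (m / (Fintype.card ι * M)) (M / (Fintype.card ι * m)) := by
  have hcard : (0 : ℝ) < Fintype.card ι := by exact_mod_cast Fintype.card_pos_iff.mpr ⟨j⟩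
  have hM : 0 < M := hm.trans_le ((hw j).1.trans (hw j).2)
  have hsum_ge : Fintype.card ι * m ≤ ∑ i, w i := by
    simpa using card_nsmul_le_sum univ w m fun i _ ↦ (hw i).1
  have hsum_le : ∑ i, w i ≤ Fintype.card ι * M := by
    simpa using sum_le_card_nsmul univ w M fun i _ ↦ (hw i).2
  have hsum_pos := (mul_pos hcard hm).trans_le hsum_ge
  exact ⟨div_le_div₀ (hm.le.trans (hw j).1) (hw j).1 hsum_pos hsum_le,
    div_le_div₀ hM.le (hw j).2 (mul_pos hcard hm) hsum_ge⟩

lemma div_le_iInf_div_iSup [Nonempty ι] {r : ι → ℝ} {a b : ℝ} (ha : 0 < a)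
    (hr : ∀ i, r i ∈ Set.Icc a b) : a / b ≤ (⨅ i, r i) / ⨆ i, r i := by
  have hinf : a ≤ ⨅ i, r i := le_ciInf fun i ↦ (hr i).1
  have hsup : (⨆ i, r i) ≤ b := ciSup_le fun i ↦ (hr i).2
  have hsup_pos : 0 < ⨆ i, r i := ha.trans_le <| hinf.trans <|
    ciInf_le_ciSup (Set.finite_range r).bddBelow (Set.finite_range r).bddAbove
  exact div_le_div₀ (ha.le.trans hinf) hinf hsup_pos hsup

end NormalizedWeights

theorem stmt16 (L : ℕ) (hL : 2 ≤ L)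
    (Z Zhat : Fin L → ℝ) (hZ : ∀ i, 0 < Z i) (hZhat : ∀ i, 0 < Zhat i)
    (hest : ∀ i : Fin L,
      (Zhat i / Z i) / (Zhat ⟨0, by omega⟩ / Z ⟨0, by omega⟩) ∈
        Set.Icc ((1 - 1 / (L : ℝ)) ^ (i : ℕ)) ((1 + 1 / (L : ℝ)) ^ (i : ℕ)))
    (r : Fin L → ℝ)
    (hr : ∀ i, r i = (Z i / Zhat i) / ∑ k, Z k / Zhat k) :
    (∀ i, Real.exp (-2) / L ≤ r i ∧ r i ≤ Real.exp 2 / L) ∧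
      Real.exp (-4) ≤ (⨅ i, r i) / (⨆ i, r i) := by
  set i₀ : Fin L := ⟨0, by omega⟩
  set w : Fin L → ℝ := fun i ↦ Z i / Zhat i
  have hw_pos i : 0 < w i := div_pos (hZ i) (hZhat i)
  have hw i : w i ∈ Set.Icc (w i₀ / exp 1) (w i₀ * exp 1) := by
    have hratio : Zhat i / Z i / (Zhat i₀ / Z i₀) = w i₀ / w i := by
      simp only [w, ← inv_div (Z _), inv_div_inv]
    have h := hratio ▸ hest i
    exact mem_Icc_div_mul_of_div_mem_Icc (hw_pos i₀) (hw_pos i)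
      ⟨exp_neg 1 ▸ (exp_neg_one_le_one_sub_inv_pow i.isLt).trans h.1,
        h.2.trans (one_add_inv_pow_le_exp_one i.isLt.le)⟩
  have hL_pos : (0 : ℝ) < L := by positivity
  have hexp2 : exp 2 = exp 1 * exp 1 := by rw [← exp_add]; norm_num
  have hw₀ := (hw_pos i₀).ne'
  have hr_mem i : r i ∈ Set.Icc (exp (-2) / L) (exp 2 / L) := by
    have h := div_sum_mem_Icc (div_pos (hw_pos i₀) (exp_pos 1)) hw i
    have hlo : w i₀ / exp 1 / (L * (w i₀ * exp 1)) = exp (-2) / L := by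
      rw [exp_neg, hexp2]; field_simp
    have hhi : w i₀ * exp 1 / (L * (w i₀ / exp 1)) = exp 2 / L := by
      rw [hexp2]; field_simp
    rw [Fintype.card_fin, hlo, hhi] at h
    exact hr i ▸ h
  have : Nonempty (Fin L) := ⟨i₀⟩
  refine ⟨hr_mem, ?_⟩
  calc exp (-4) = (exp (-2) / L) / (exp 2 / L) := by
        rw [div_div_div_cancel_right₀ hL_pos.ne', ← exp_sub]; norm_num
    _ ≤ (⨅ i, r i) / ⨆ i, r i := div_le_iInf_div_iSup (by positivity) hr_mem
end

section
/- Let X follow the d-dimensional Gaussian distribution with mean μ and positive semidefinite covariance matrix Σ, and let ‖Σ‖ denote the largest eigenvalue of Σ. Then for any ε ∈ (0,1), P( ‖X‖ ≤ ‖μ‖ + √(d‖Σ‖) + √(2‖Σ‖ log(1/ε)) ) ≥ 1 − ε. -/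
/-!
Write `X = μ + A z` with `z` standard Gaussian. Then `‖X‖ ≤ ‖μ‖ + ‖A‖ ‖z‖`, and the C⋆-identity
`‖A‖² = ‖A Aᵀ‖` together with the spectral theorem gives `‖A‖² = ‖Σ‖`. The chi-square variable
`‖z‖²` has moment generating function `(1 - 2t)^(-d/2)`; the Chernoff bound at the `t` with
`1 - 2t = d / (√d + √(2L))²` gives `P(‖z‖ ≥ √d + √(2L)) ≤ e^(-L)`, using only `log x ≤ x - 1`.
Take `L = log (1/ε)`.
-/

open MeasureTheory ProbabilityTheory Matrix

noncomputable section

def euclNorm {d : ℕ} (v : Fin d → ℝ) : ℝ := Real.sqrt (∑ k, v k ^ 2)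

open Real
open scoped ENNReal Matrix.Norms.L2Operator

lemma gaussianPDFReal_mul_exp_mul_sq (t x : ℝ) :
    gaussianPDFReal 0 1 x * exp (t * x ^ 2) = (√(2 * π))⁻¹ * exp (-(1 / 2 - t) * x ^ 2) := by
  rw [gaussianPDFReal, mul_assoc, ← exp_add]
  simp only [NNReal.coe_one, mul_one, sub_zero]
  ring_nf

lemma integrable_exp_mul_sq_gaussianReal {t : ℝ} (ht : t < 1 / 2) :
    Integrable (fun x => exp (t * x ^ 2)) (gaussianReal 0 1) := by
  rw [gaussianReal_of_var_ne_zero _ one_ne_zero, integrable_withDensity_iff_integrable_smul'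
    (measurable_gaussianPDF 0 1) (ae_of_all _ fun _ => gaussianPDF_lt_top)]
  simp_rw [toReal_gaussianPDF, smul_eq_mul, gaussianPDFReal_mul_exp_mul_sq]
  exact (integrable_exp_neg_mul_sq (by linarith)).const_mul _

/-- For `t ≥ 1/2` both sides are junk `0`. -/
lemma mgf_sq_gaussianReal (t : ℝ) :
    mgf (fun x => x ^ 2) (gaussianReal 0 1) t = (√(1 - 2 * t))⁻¹ := by
  rw [mgf, integral_gaussianReal_eq_integral_smul one_ne_zero]
  simp_rw [smul_eq_mul, gaussianPDFReal_mul_exp_mul_sq, integral_const_mul, integral_gaussian]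
  have h : 1 - 2 * t = 2 * (1 / 2 - t) := by ring
  rw [h, sqrt_div pi_pos.le, sqrt_mul zero_le_two, sqrt_mul zero_le_two]
  have : √π ≠ 0 := by positivity
  field_simp

lemma sq_mul_log_add_div_le {a b : ℝ} (ha : 0 < a) (hb : 0 ≤ b) :
    a ^ 2 * log ((a + b) / a) ≤ a * b := by
  have hlog := log_le_sub_one_of_pos (show 0 < (a + b) / a by positivity)
  have : (a + b) / a - 1 = b / a := by field_simp; ring
  calc a ^ 2 * log ((a + b) / a) ≤ a ^ 2 * (b / a) := by gcongr; linarith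
    _ = a * b := by field_simp

section ChiSquare

variable {ι : Type*} [Fintype ι]

lemma exp_mul_sum_sq (t : ℝ) (z : ι → ℝ) : exp (t * ∑ i, z i ^ 2) = ∏ i, exp (t * z i ^ 2) := by
  rw [Finset.mul_sum, exp_sum]

lemma integrable_exp_mul_sum_sq_pi_gaussianReal {t : ℝ} (ht : t < 1 / 2) :
    Integrable (fun z : ι → ℝ => exp (t * ∑ i, z i ^ 2))
      (Measure.pi fun _ => gaussianReal 0 1) := by
  simp_rw [exp_mul_sum_sq]
  exact Integrable.fintype_prod (f := fun _ x => exp (t * x ^ 2))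
    fun _ => integrable_exp_mul_sq_gaussianReal ht

lemma mgf_sum_sq_pi_gaussianReal (t : ℝ) :
    mgf (fun z : ι → ℝ => ∑ i, z i ^ 2) (Measure.pi fun _ => gaussianReal 0 1) t
      = (√(1 - 2 * t))⁻¹ ^ Fintype.card ι := by
  simp_rw [mgf, exp_mul_sum_sq]
  rw [integral_fintype_prod_eq_pow (fun x => exp (t * x ^ 2))]
  exact congrArg (· ^ _) (mgf_sq_gaussianReal t)

theorem measure_sum_sq_pi_gaussianReal_ge_le {L : ℝ} (hL : 0 < L) :
    ((Measure.pi fun _ : ι => gaussianReal 0 1)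
      {z | (√(Fintype.card ι) + √(2 * L)) ^ 2 ≤ ∑ i, z i ^ 2}).toReal ≤ exp (-L) := by
  set n := Fintype.card ι
  set a := √(n : ℝ)
  set b := √(2 * L)
  have hb : 0 < b := by positivity
  have hb2 : b ^ 2 = 2 * L := sq_sqrt (by positivity)
  rcases Nat.eq_zero_or_pos n with hn | hn
  · have : IsEmpty ι := Fintype.card_eq_zero_iff.1 hn
    have hempty : {z : ι → ℝ | (a + b) ^ 2 ≤ ∑ i, z i ^ 2} = ∅ := by
      ext z
      simp only [Finset.univ_eq_empty, Finset.sum_empty, Set.mem_ofPred_eq,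
        Set.mem_empty_iff_false, iff_false, not_le]
      positivity
    simp only [hempty, measure_empty, ENNReal.toReal_zero]
    positivity
  have ha : 0 < a := by positivity
  have ha2 : a ^ 2 = n := sq_sqrt (by positivity)
  -- the optimal Chernoff parameter, making `1 - 2t = n / (a + b)²`
  set t := b * (2 * a + b) / (2 * (a + b) ^ 2) with ht_def
  have ht0 : 0 ≤ t := by positivity
  have h2t : 1 - 2 * t = (a / (a + b)) ^ 2 := by rw [ht_def]; field_simp; ring
  have ht : t < 1 / 2 := by nlinarith [show 0 < (a / (a + b)) ^ 2 by positivity]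
  have htT : t * (a + b) ^ 2 = a * b + L := by rw [ht_def]; field_simp; linarith
  calc _ ≤ exp (-t * (a + b) ^ 2) * mgf (fun z : ι → ℝ => ∑ i, z i ^ 2)
          (Measure.pi fun _ => gaussianReal 0 1) t :=
        measure_ge_le_exp_mul_mgf _ ht0 (integrable_exp_mul_sum_sq_pi_gaussianReal ht)
    _ = exp (a ^ 2 * log ((a + b) / a) - (a * b + L)) := by
        rw [mgf_sum_sq_pi_gaussianReal, h2t, sqrt_sq (by positivity), inv_div, ha2,
          sub_eq_add_neg, exp_add, exp_nat_mul, exp_log (by positivity), neg_mul, htT, mul_comm]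
    _ ≤ exp (-L) := exp_le_exp.2 (by linarith [sq_mul_log_add_div_le ha hb.le])

end ChiSquare

namespace Matrix

open scoped ComplexOrder

variable {n 𝕜 : Type*} [Fintype n] [DecidableEq n] [RCLike 𝕜] {S : Matrix n n 𝕜}

theorem IsHermitian.l2_opNorm_eq (hS : S.IsHermitian) : ‖S‖ = ‖hS.eigenvalues‖ := by
  conv_lhs => rw [hS.spectral_theorem, Unitary.conjStarAlgAut_apply]
  rw [CStarRing.norm_mul_mem_unitary _ (Unitary.star_mem (SetLike.coe_mem _)),
    CStarRing.norm_coe_unitary_mul, l2_opNorm_diagonal]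
  simp [Pi.norm_def, Function.comp_def]

theorem PosSemidef.l2_opNorm_eq_of_isGreatest (hS : S.PosSemidef) {s : ℝ}
    (hs : IsGreatest (Set.range hS.isHermitian.eigenvalues) s) : ‖S‖ = s := by
  obtain ⟨⟨i, rfl⟩, hmax⟩ := hs
  rw [hS.isHermitian.l2_opNorm_eq]
  refine le_antisymm ((pi_norm_le_iff_of_nonneg (hS.eigenvalues_nonneg i)).2 fun j => ?_) ?_
  · rw [norm_of_nonneg (hS.eigenvalues_nonneg j)]
    exact hmax ⟨j, rfl⟩
  · exact (le_norm_self _).trans (norm_le_pi_norm _ i)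

end Matrix

lemma euclNorm_eq_norm {d : ℕ} (v : Fin d → ℝ) : euclNorm v = ‖WithLp.toLp 2 v‖ := by
  simp [euclNorm, EuclideanSpace.norm_eq]

lemma euclNorm_add_le {d : ℕ} (v w : Fin d → ℝ) :
    euclNorm (v + w) ≤ euclNorm v + euclNorm w := by
  simpa only [euclNorm_eq_norm, WithLp.toLp_add] using norm_add_le _ _

lemma euclNorm_mulVec_le {d : ℕ} (A : Matrix (Fin d) (Fin d) ℝ) (v : Fin d → ℝ) :
    euclNorm (A *ᵥ v) ≤ ‖A‖ * euclNorm v := by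
  rw [euclNorm_eq_norm, euclNorm_eq_norm]
  exact A.l2_opNorm_mulVec (WithLp.toLp 2 v)

lemma measure_lt_euclNorm_pi_gaussianReal_le {d : ℕ} {L : ℝ} (hL : 0 < L) :
    (Measure.pi fun _ : Fin d => gaussianReal 0 1) {z | √d + √(2 * L) < euclNorm z}
      ≤ ENNReal.ofReal (exp (-L)) := by
  have htail := measure_sum_sq_pi_gaussianReal_ge_le (ι := Fin d) hL
  rw [Fintype.card_fin, ← ENNReal.le_ofReal_iff_toReal_le (measure_ne_top _ _) (exp_nonneg _)]
    at htail
  refine (measure_mono fun z hz => ?_).trans htail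
  exact ((lt_sqrt (by positivity)).1 hz).le

lemma ofReal_one_sub_le_of_measure_compl_le {Ω : Type*} [MeasurableSpace Ω] {P : Measure Ω}
    [IsProbabilityMeasure P] {s : Set Ω} {ε : ℝ} (hε : 0 ≤ ε) (h : P sᶜ ≤ ENNReal.ofReal ε) :
    ENNReal.ofReal (1 - ε) ≤ P s := by
  rw [ENNReal.ofReal_sub _ hε, ENNReal.ofReal_one, tsub_le_iff_right, ← measure_univ (μ := P)]
  exact (measure_univ_le_add_compl s).trans (add_le_add_right h _)

/-- `X` is realized as `μ + A z` with `z` a vector of i.i.d. standard Gaussians, so `Σ = A Aᵀ`. -/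
theorem stmt18 (d : ℕ) (μ : Fin d → ℝ) (A : Matrix (Fin d) (Fin d) ℝ)
    (Sig : Matrix (Fin d) (Fin d) ℝ) (hSig : Sig = A * Aᵀ)
    (hpsd : Sig.PosSemidef)
    (s : ℝ) (hs : IsGreatest (Set.range hpsd.isHermitian.eigenvalues) s)
    (ε : ℝ) (hε : ε ∈ Set.Ioo (0 : ℝ) 1) :
    ENNReal.ofReal (1 - ε) ≤
      (Measure.pi fun _ : Fin d => gaussianReal 0 1)
        {z | euclNorm (μ + A *ᵥ z) ≤
          euclNorm μ + Real.sqrt (d * s) + Real.sqrt (2 * s * Real.log (1 / ε))} := by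
  obtain ⟨hε0, hε1⟩ := hε
  subst hSig
  set P := Measure.pi fun _ : Fin d => gaussianReal 0 1
  set L := log (1 / ε)
  have hL : 0 < L := log_pos (one_lt_one_div hε0 hε1)
  set R := √d + √(2 * L)
  have hs0 : 0 ≤ s := hpsd.l2_opNorm_eq_of_isGreatest hs ▸ norm_nonneg _
  have hA : ‖A‖ = √s := by
    rw [← hpsd.l2_opNorm_eq_of_isGreatest hs, ← conjTranspose_eq_transpose_of_trivial,
      ← star_eq_conjTranspose, CStarRing.norm_self_mul_star, sqrt_mul_self (norm_nonneg _)]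
  have hgood : {z | euclNorm z ≤ R} ⊆
      {z | euclNorm (μ + A *ᵥ z) ≤ euclNorm μ + √(d * s) + √(2 * s * L)} := by
    intro z hz
    calc euclNorm (μ + A *ᵥ z) ≤ euclNorm μ + √s * R := by
          grw [euclNorm_add_le, euclNorm_mulVec_le, hA, Set.mem_ofPred_eq.mp hz]
      _ = euclNorm μ + √(d * s) + √(2 * s * L) := by
          rw [add_assoc, mul_add, ← sqrt_mul hs0, ← sqrt_mul hs0]
          ring_nf
  have hbad : P {z | euclNorm z ≤ R}ᶜ ≤ ENNReal.ofReal ε := by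
    have hexp : exp (-L) = ε := by simp [L, exp_log hε0]
    simpa only [Set.compl_ofPred, not_le, hexp] using measure_lt_euclNorm_pi_gaussianReal_le hL
  exact (ofReal_one_sub_le_of_measure_compl_le hε0.le hbad).trans (measure_mono hgood)
end
end
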